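/- arXiv:2403.01467 — 2 statements merged into one kernel-verified Lean document; each statement's English description precedes it below -/
import Mathlib

section
/- Suppose the loss function ℓ(h, f)(x) = |h(x) − f(x)| defines risks ε_S(h) = E_{x∼D_S}|h(x) − f_S(x)| and ε_T(h) = E_{x∼D_T}|h(x) − f_T(x)|, where all hypotheses and labeling functions are K-Lipschitz and bounded. Then for any hypotheses ĥ and f*, ε_T(ĥ) ≤ ε_S(ĥ) + 2K·W₁(D_S, D_T) + ε_S(f*) + ε_T(f*). -/
open MeasureTheory

/-- The 1-Wasserstein distance: infimum over couplings of the integral of the distance. -/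
noncomputable def W1 {X : Type*} [MeasurableSpace X] [PseudoEMetricSpace X]
    (μ ν : Measure X) : ENNReal :=
  sInf { c | ∃ γ : Measure (X × X), IsProbabilityMeasure γ ∧
    γ.map Prod.fst = μ ∧ γ.map Prod.snd = ν ∧ c = ∫⁻ p, edist p.1 p.2 ∂γ }

/-- The risk of a hypothesis `h` against the labeling function `f` under distribution `D`:
the expected absolute error. -/
noncomputable def risk {X : Type*} [MeasurableSpace X] (D : Measure X) (h f : X → ℝ) : ℝ :=
  ∫ x, |h x - f x| ∂D

lemma aux_integrable {X : Type*} [MeasurableSpace X] [MetricSpace X] [BorelSpace X]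
    (μ : Measure X) [IsProbabilityMeasure μ]
    (g : X → ℝ) (hg : Continuous g) (hbd : ∃ C, ∀ x, |g x| ≤ C) :
    Integrable g μ := by
  obtain ⟨C, hC⟩ := hbd
  exact (integrable_const C).mono' hg.measurable.aestronglyMeasurable
    (Filter.Eventually.of_forall fun x => by simpa [Real.norm_eq_abs] using hC x)

lemma aux_key {X : Type*} [MeasurableSpace X] [MetricSpace X] [BorelSpace X]
    (μ ν : Measure X) [IsProbabilityMeasure μ] [IsProbabilityMeasure ν]
    (γ : Measure (X × X)) [IsProbabilityMeasure γ]
    (hμ : γ.map Prod.fst = μ) (hν : γ.map Prod.snd = ν)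
    (L : NNReal) (g : X → ℝ) (hg : LipschitzWith L g) (hg0 : ∀ x, 0 ≤ g x)
    (hbd : ∃ C, ∀ x, |g x| ≤ C) :
    ENNReal.ofReal (∫ x, g x ∂ν) ≤
      ENNReal.ofReal (∫ x, g x ∂μ) + L * ∫⁻ p, edist p.1 p.2 ∂γ := by
  have hgm : Measurable g := hg.continuous.measurable
  have hiν : Integrable g ν := aux_integrable ν g hg.continuous hbd
  have hiμ : Integrable g μ := aux_integrable μ g hg.continuous hbd
  rw [ofReal_integral_eq_lintegral_ofReal hiν (Filter.Eventually.of_forall hg0),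
      ofReal_integral_eq_lintegral_ofReal hiμ (Filter.Eventually.of_forall hg0),
      ← hν, ← hμ,
      lintegral_map (hgm.ennreal_ofReal) measurable_snd,
      lintegral_map (hgm.ennreal_ofReal) measurable_fst,
      ← lintegral_const_mul' _ _ ENNReal.coe_ne_top,
      ← lintegral_add_left (show Measurable fun p : X × X => ENNReal.ofReal (g p.1) from
          hgm.ennreal_ofReal.comp measurable_fst)]
  refine lintegral_mono fun p => ?_
  have h1 : g p.2 ≤ g p.1 + L * dist p.1 p.2 := by
    have := hg.dist_le_mul p.2 p.1
    have h2 : g p.2 - g p.1 ≤ L * dist p.1 p.2 := by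
      calc g p.2 - g p.1 ≤ |g p.2 - g p.1| := le_abs_self _
        _ = dist (g p.2) (g p.1) := (Real.dist_eq _ _).symm
        _ ≤ L * dist p.2 p.1 := this
        _ = L * dist p.1 p.2 := by rw [dist_comm]
    linarith
  calc ENNReal.ofReal (g p.2) ≤ ENNReal.ofReal (g p.1 + L * dist p.1 p.2) :=
        ENNReal.ofReal_le_ofReal h1
    _ ≤ ENNReal.ofReal (g p.1) + ENNReal.ofReal (L * dist p.1 p.2) := ENNReal.ofReal_add_le
    _ = ENNReal.ofReal (g p.1) + L * edist p.1 p.2 := by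
        rw [ENNReal.ofReal_mul (by positivity), edist_dist]
        simp [ENNReal.ofReal_coe_nnreal]

/-- Generalization bound (Shen et al., Theorem 1): for `K`-Lipschitz bounded hypotheses and
labeling functions, `ε_T(ĥ) ≤ ε_S(ĥ) + 2K·W₁(D_S, D_T) + ξ` where
`ξ = ε_S(f*) + ε_T(f*)`. -/
theorem risk_target_le_risk_source_add_W1 {X : Type*} [MeasurableSpace X]
    [MetricSpace X] [BorelSpace X]
    (DS DT : Measure X) [IsProbabilityMeasure DS] [IsProbabilityMeasure DT]
    (K : NNReal) (hhat fstar fS fT : X → ℝ)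
    (hhat_lip : LipschitzWith K hhat) (hfstar_lip : LipschitzWith K fstar)
    (hfS_lip : LipschitzWith K fS) (hfT_lip : LipschitzWith K fT)
    (hhat_bd : ∃ C, ∀ x, |hhat x| ≤ C) (hfstar_bd : ∃ C, ∀ x, |fstar x| ≤ C)
    (hfS_bd : ∃ C, ∀ x, |fS x| ≤ C) (hfT_bd : ∃ C, ∀ x, |fT x| ≤ C) :
    ENNReal.ofReal (risk DT hhat fT) ≤
      ENNReal.ofReal (risk DS hhat fS) + 2 * (K : ENNReal) * W1 DS DT +
        ENNReal.ofReal (risk DS fstar fS + risk DT fstar fT) := by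
  -- the difference function and its properties
  set g : X → ℝ := fun x => |hhat x - fstar x| with hg_def
  have hg_lip : LipschitzWith (K + K) g := by
    have h := lipschitzWith_one_norm.comp (hhat_lip.sub hfstar_lip)
    simpa [Real.norm_eq_abs, Function.comp_def] using h
  have hg0 : ∀ x, 0 ≤ g x := fun x => abs_nonneg _
  have hg_bd : ∃ C, ∀ x, |g x| ≤ C := by
    obtain ⟨C1, h1⟩ := hhat_bd; obtain ⟨C2, h2⟩ := hfstar_bd
    exact ⟨C1 + C2, fun x => by
      simp only [hg_def, abs_abs]
      exact (abs_sub _ _).trans (add_le_add (h1 x) (h2 x))⟩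
  -- integrability facts
  have cont : ∀ f : X → ℝ, LipschitzWith K f → Continuous f := fun f hf => hf.continuous
  have habs_bd : ∀ (f₁ f₂ : X → ℝ), (∃ C, ∀ x, |f₁ x| ≤ C) → (∃ C, ∀ x, |f₂ x| ≤ C) →
      ∃ C, ∀ x, |(|f₁ x - f₂ x|)| ≤ C := by
    rintro f₁ f₂ ⟨C1, h1⟩ ⟨C2, h2⟩
    exact ⟨C1 + C2, fun x => by
      rw [abs_abs]; exact (abs_sub _ _).trans (add_le_add (h1 x) (h2 x))⟩
  have hint : ∀ (D : Measure X) [IsProbabilityMeasure D] (f₁ f₂ : X → ℝ),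
      LipschitzWith K f₁ → LipschitzWith K f₂ → (∃ C, ∀ x, |f₁ x| ≤ C) →
      (∃ C, ∀ x, |f₂ x| ≤ C) → Integrable (fun x => |f₁ x - f₂ x|) D := by
    intro D _ f₁ f₂ hl1 hl2 hb1 hb2
    exact aux_integrable D _ ((hl1.continuous.sub hl2.continuous).abs)
      (habs_bd f₁ f₂ hb1 hb2)
  -- triangle inequality on the target
  have tri_T : risk DT hhat fT ≤ risk DT hhat fstar + risk DT fstar fT := by
    rw [show risk DT hhat fstar + risk DT fstar fT
        = ∫ x, (|hhat x - fstar x| + |fstar x - fT x|) ∂DT from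
      (integral_add (hint DT hhat fstar hhat_lip hfstar_lip hhat_bd hfstar_bd)
        (hint DT fstar fT hfstar_lip hfT_lip hfstar_bd hfT_bd)).symm]
    exact integral_mono (hint DT hhat fT hhat_lip hfT_lip hhat_bd hfT_bd)
      ((hint DT hhat fstar hhat_lip hfstar_lip hhat_bd hfstar_bd).add
        (hint DT fstar fT hfstar_lip hfT_lip hfstar_bd hfT_bd))
      (fun x => by simpa using abs_sub_le (hhat x) (fstar x) (fT x))
  -- triangle inequality on the source
  have tri_S : risk DS hhat fstar ≤ risk DS hhat fS + risk DS fstar fS := by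
    rw [show risk DS hhat fS + risk DS fstar fS
        = ∫ x, (|hhat x - fS x| + |fstar x - fS x|) ∂DS from
      (integral_add (hint DS hhat fS hhat_lip hfS_lip hhat_bd hfS_bd)
        (hint DS fstar fS hfstar_lip hfS_lip hfstar_bd hfS_bd)).symm]
    refine integral_mono (hint DS hhat fstar hhat_lip hfstar_lip hhat_bd hfstar_bd)
      ((hint DS hhat fS hhat_lip hfS_lip hhat_bd hfS_bd).add
        (hint DS fstar fS hfstar_lip hfS_lip hfstar_bd hfS_bd))
      (fun x => ?_)
    have := abs_sub_le (hhat x) (fS x) (fstar x)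
    simpa [abs_sub_comm (fS x) (fstar x)] using this
  -- Wasserstein step
  have wass : ENNReal.ofReal (risk DT hhat fstar) ≤
      ENNReal.ofReal (risk DS hhat fstar) + 2 * (K : ENNReal) * W1 DS DT := by
    set S : Set ENNReal := { c | ∃ γ : Measure (X × X), IsProbabilityMeasure γ ∧
      γ.map Prod.fst = DS ∧ γ.map Prod.snd = DT ∧ c = ∫⁻ p, edist p.1 p.2 ∂γ } with hS_def
    have hne : S.Nonempty := by
      refine ⟨∫⁻ p, edist p.1 p.2 ∂(DS.prod DT), DS.prod DT, inferInstance, ?_, ?_, rfl⟩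
      · simp [Measure.map_fst_prod]
      · simp [Measure.map_snd_prod]
    have key : ∀ c ∈ S, ENNReal.ofReal (risk DT hhat fstar) ≤
        ENNReal.ofReal (risk DS hhat fstar) + 2 * (K : ENNReal) * c := by
      rintro c ⟨γ, hγ, hγ1, hγ2, rfl⟩
      have := aux_key DS DT γ hγ1 hγ2 (K + K) g hg_lip hg0 hg_bd
      have h2K : ((K + K : NNReal) : ENNReal) = 2 * (K : ENNReal) := by
        push_cast; ring
      calc ENNReal.ofReal (risk DT hhat fstar)
          ≤ ENNReal.ofReal (risk DS hhat fstar)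
            + ((K + K : NNReal) : ENNReal) * ∫⁻ p, edist p.1 p.2 ∂γ := this
        _ = _ := by rw [h2K]
    have : W1 DS DT = ⨅ c : S, (c : ENNReal) := by
      rw [W1, ← hS_def, sInf_eq_iInf']
    rw [this]
    haveI : Nonempty S := hne.to_subtype
    rw [ENNReal.mul_iInf (f := fun c : S => (c : ENNReal))
      (by intro h; exact absurd h (by simp [ENNReal.mul_eq_top])),
      ENNReal.add_iInf]
    exact le_iInf fun c => key c.1 c.2
  -- nonnegativity of risks
  have rnn : ∀ (D : Measure X) (f₁ f₂ : X → ℝ), 0 ≤ risk D f₁ f₂ := fun D f₁ f₂ =>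
    integral_nonneg fun x => abs_nonneg _
  -- assemble
  calc ENNReal.ofReal (risk DT hhat fT)
      ≤ ENNReal.ofReal (risk DT hhat fstar + risk DT fstar fT) :=
        ENNReal.ofReal_le_ofReal tri_T
    _ = ENNReal.ofReal (risk DT hhat fstar) + ENNReal.ofReal (risk DT fstar fT) :=
        ENNReal.ofReal_add (rnn _ _ _) (rnn _ _ _)
    _ ≤ (ENNReal.ofReal (risk DS hhat fstar) + 2 * (K : ENNReal) * W1 DS DT)
        + ENNReal.ofReal (risk DT fstar fT) := add_le_add_left wass _
    _ ≤ (ENNReal.ofReal (risk DS hhat fS + risk DS fstar fS) + 2 * (K : ENNReal) * W1 DS DT)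
        + ENNReal.ofReal (risk DT fstar fT) := by
          gcongr
    _ = _ := by
        rw [ENNReal.ofReal_add (rnn _ _ _) (rnn _ _ _),
            ENNReal.ofReal_add (rnn _ _ _) (rnn _ _ _)]
        ring
end

section
/- Combining the neighborhood coupling bound with the Wasserstein generalization bound: if every target sample has a neighbor within L1 distance r (so W₁(D_N, D_T) ≤ r), and all hypotheses are K-Lipschitz with combined error ξ = ε_T(f*) + ε_N(f*), then ε_T(ĥ) ≤ ε_N(ĥ) + 2Kr + ξ. -/
open MeasureTheory

lemma integrable_abs_sub' {X : Type*} [MeasurableSpace X] [MetricSpace X] [BorelSpace X]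
    (μ : Measure X) [IsFiniteMeasure μ] {f g : X → ℝ} (hf : Continuous f) (hg : Continuous g)
    (hfb : ∃ C, ∀ x, |f x| ≤ C) (hgb : ∃ C, ∀ x, |g x| ≤ C) :
    Integrable (fun x => |f x - g x|) μ := by
  obtain ⟨C1, h1⟩ := hfb; obtain ⟨C2, h2⟩ := hgb
  refine Integrable.mono' (integrable_const (C1 + C2))
    ((hf.sub hg).abs).aestronglyMeasurable ?_
  refine Filter.Eventually.of_forall fun x => ?_
  have : |f x - g x| ≤ |f x| + |g x| := abs_sub _ _
  simp only [Real.norm_eq_abs, abs_abs]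
  linarith [h1 x, h2 x]

lemma risk_triangle {X : Type*} [MeasurableSpace X] [MetricSpace X] [BorelSpace X]
    (μ : Measure X) [IsFiniteMeasure μ] {a b c : X → ℝ}
    (ha : Continuous a) (hb : Continuous b) (hc : Continuous c)
    (hab : ∃ C, ∀ x, |a x| ≤ C) (hbb : ∃ C, ∀ x, |b x| ≤ C) (hcb : ∃ C, ∀ x, |c x| ≤ C) :
    risk μ a c ≤ risk μ a b + risk μ b c := by
  have i1 := integrable_abs_sub' μ ha hc hab hcb
  have i2 := integrable_abs_sub' μ ha hb hab hbb
  have i3 := integrable_abs_sub' μ hb hc hbb hcb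
  unfold risk
  rw [← integral_add i2 i3]
  refine integral_mono i1 (i2.add i3) fun x => ?_
  have : a x - c x = (a x - b x) + (b x - c x) := by ring
  rw [this]
  exact abs_add_le _ _

/-- Theorem 2 of the paper: if `W₁(D_N, D_T) ≤ r` (every target sample has a neighbor within
L1 distance `r`), then for `K`-Lipschitz bounded hypotheses
`ε_T(ĥ) ≤ ε_N(ĥ) + 2Kr + ξ` where `ξ = ε_N(f*) + ε_T(f*)`. -/
theorem risk_target_le_risk_neighborhood_add_2Kr {X : Type*} [MeasurableSpace X]
    [MetricSpace X] [BorelSpace X]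
    (DN DT : Measure X) [IsProbabilityMeasure DN] [IsProbabilityMeasure DT]
    (K : NNReal) (hhat fstar fN fT : X → ℝ)
    (hhat_lip : LipschitzWith K hhat) (hfstar_lip : LipschitzWith K fstar)
    (hfN_lip : LipschitzWith K fN) (hfT_lip : LipschitzWith K fT)
    (hhat_bd : ∃ C, ∀ x, |hhat x| ≤ C) (hfstar_bd : ∃ C, ∀ x, |fstar x| ≤ C)
    (hfN_bd : ∃ C, ∀ x, |fN x| ≤ C) (hfT_bd : ∃ C, ∀ x, |fT x| ≤ C)
    (r : ℝ) (hr : 0 ≤ r) (hW1 : W1 DN DT ≤ ENNReal.ofReal r) :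
    ENNReal.ofReal (risk DT hhat fT) ≤
      ENNReal.ofReal (risk DN hhat fN) + 2 * (K : ENNReal) * ENNReal.ofReal r +
        ENNReal.ofReal (risk DN fstar fN + risk DT fstar fT) := by
  have chhat := hhat_lip.continuous
  have cfstar := hfstar_lip.continuous
  have cfN := hfN_lip.continuous
  have cfT := hfT_lip.continuous
  -- g = |hhat - fstar| is 2K-Lipschitz and nonneg
  set g : X → ℝ := fun x => |hhat x - fstar x| with hg
  have hg0 : ∀ x, 0 ≤ g x := fun x => abs_nonneg _
  have hglip : ∀ x y : X, g y ≤ g x + 2 * K * dist x y := by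
    intro x y
    have h1 : dist (hhat y) (hhat x) ≤ K * dist y x := hhat_lip.dist_le_mul y x
    have h2 : dist (fstar y) (fstar x) ≤ K * dist y x := hfstar_lip.dist_le_mul y x
    simp only [Real.dist_eq] at h1 h2
    have hd : dist x y = dist y x := dist_comm x y
    have : |hhat y - fstar y| ≤ |hhat x - fstar x| + (|hhat y - hhat x| + |fstar y - fstar x|) := by
      have : hhat y - fstar y = (hhat x - fstar x) + ((hhat y - hhat x) - (fstar y - fstar x)) := by ring
      rw [this]
      calc |(hhat x - fstar x) + ((hhat y - hhat x) - (fstar y - fstar x))|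
          ≤ |hhat x - fstar x| + |(hhat y - hhat x) - (fstar y - fstar x)| := abs_add_le _ _
        _ ≤ _ := by gcongr; exact abs_sub _ _
    simp only [hg, hd]
    linarith
  -- key coupling bound
  have key : ∀ γ : Measure (X × X), IsProbabilityMeasure γ → γ.map Prod.fst = DN →
      γ.map Prod.snd = DT →
      ENNReal.ofReal (risk DT hhat fstar) ≤ ENNReal.ofReal (risk DN hhat fstar) +
        2 * (K : ENNReal) * ∫⁻ p, edist p.1 p.2 ∂γ := by
    intro γ hγ hfst hsnd
    have mg : Measurable fun x => ENNReal.ofReal (g x) :=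
      ENNReal.measurable_ofReal.comp ((chhat.sub cfstar).abs.measurable)
    have iT : Integrable g DT := integrable_abs_sub' DT chhat cfstar hhat_bd hfstar_bd
    have iN : Integrable g DN := integrable_abs_sub' DN chhat cfstar hhat_bd hfstar_bd
    have eT : ENNReal.ofReal (risk DT hhat fstar) = ∫⁻ x, ENNReal.ofReal (g x) ∂DT := by
      unfold risk
      exact ofReal_integral_eq_lintegral_ofReal iT (Filter.Eventually.of_forall hg0)
    have eN : ENNReal.ofReal (risk DN hhat fstar) = ∫⁻ x, ENNReal.ofReal (g x) ∂DN := by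
      unfold risk
      exact ofReal_integral_eq_lintegral_ofReal iN (Filter.Eventually.of_forall hg0)
    rw [eT, eN, ← hfst, ← hsnd, lintegral_map mg measurable_snd, lintegral_map mg measurable_fst]
    calc ∫⁻ p, ENNReal.ofReal (g p.2) ∂γ
        ≤ ∫⁻ p, (ENNReal.ofReal (g p.1) + 2 * (K : ENNReal) * edist p.1 p.2) ∂γ := by
          refine lintegral_mono fun p => ?_
          have hb := hglip p.1 p.2
          calc ENNReal.ofReal (g p.2) ≤ ENNReal.ofReal (g p.1 + 2 * K * dist p.1 p.2) :=
                ENNReal.ofReal_le_ofReal hb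
            _ = ENNReal.ofReal (g p.1) + ENNReal.ofReal (2 * K * dist p.1 p.2) := by
                rw [ENNReal.ofReal_add (hg0 _) (by positivity)]
            _ = ENNReal.ofReal (g p.1) + 2 * (K : ENNReal) * edist p.1 p.2 := by
                rw [edist_dist, ← ENNReal.ofReal_ofNat 2,
                  ← ENNReal.ofReal_coe_nnreal, ← ENNReal.ofReal_mul (by norm_num),
                  ← ENNReal.ofReal_mul (by positivity)]
      _ = (∫⁻ p, ENNReal.ofReal (g p.1) ∂γ) + 2 * (K : ENNReal) * ∫⁻ p, edist p.1 p.2 ∂γ := by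
          rw [lintegral_add_left (show Measurable fun p : X × X => ENNReal.ofReal (g p.1) from
            mg.comp measurable_fst), lintegral_const_mul' _ _ (by finiteness)]
  -- from W1 bound to the inequality
  have step : ENNReal.ofReal (risk DT hhat fstar) ≤
      ENNReal.ofReal (risk DN hhat fstar) + 2 * (K : ENNReal) * ENNReal.ofReal r := by
    refine ENNReal.le_of_forall_pos_le_add fun ε hε hlt => ?_
    rcases eq_or_ne K 0 with hK | hK
    · -- K = 0 : any coupling works, S nonempty
      have hS : W1 DN DT < ⊤ := lt_of_le_of_lt hW1 (by exact ENNReal.ofReal_lt_top)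
      have : W1 DN DT < ⊤ := hS
      rw [W1] at this
      have hne : { c | ∃ γ : Measure (X × X), IsProbabilityMeasure γ ∧
          γ.map Prod.fst = DN ∧ γ.map Prod.snd = DT ∧ c = ∫⁻ p, edist p.1 p.2 ∂γ }.Nonempty := by
        by_contra h
        rw [Set.not_nonempty_iff_eq_empty] at h
        rw [h, sInf_empty] at this
        exact lt_irrefl _ this
      obtain ⟨c, γ, hγ, h1, h2, h3⟩ := hne
      have h0 : ENNReal.ofReal (risk DT hhat fstar) ≤ ENNReal.ofReal (risk DN hhat fstar) := by
        have := key γ hγ h1 h2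
        rw [hK] at this
        simpa using this
      exact h0.trans (le_add_right (le_add_right le_rfl))
    · -- K ≠ 0
      have h2K : (2 * K : NNReal) ≠ 0 := by simp [hK]
      set δ : NNReal := ε / (2 * K) with hδ
      have hδpos : 0 < δ := div_pos hε (zero_lt_iff.mpr h2K)
      have hsInf : W1 DN DT < ENNReal.ofReal r + δ :=
        lt_of_le_of_lt hW1 (ENNReal.lt_add_right ENNReal.ofReal_ne_top (by exact_mod_cast hδpos.ne'))
      rw [W1] at hsInf
      obtain ⟨c, hc, hclt⟩ := sInf_lt_iff.mp hsInf
      obtain ⟨γ, hγ, h1, h2, h3⟩ := hc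
      have hkey := key γ hγ h1 h2
      rw [← h3] at hkey
      have : ENNReal.ofReal (risk DT hhat fstar) ≤
          ENNReal.ofReal (risk DN hhat fstar) + 2 * (K : ENNReal) * (ENNReal.ofReal r + δ) := by
        exact hkey.trans (add_le_add_right (mul_le_mul_right hclt.le _) _)
      refine this.trans ?_
      rw [mul_add, ← add_assoc]
      refine add_le_add_right ?_ _
      -- 2 * K * δ ≤ ε
      have e1 : (2 : ENNReal) * K * δ = ((2 * K * δ : NNReal) : ENNReal) := by
        push_cast; ring
      have e2 : (2 * K * δ : NNReal) = ε := by
        rw [hδ]; field_simp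
      rw [e1, e2]
  -- triangle inequalities
  have R1 : risk DT hhat fT ≤ risk DT hhat fstar + risk DT fstar fT :=
    risk_triangle DT chhat cfstar cfT hhat_bd hfstar_bd hfT_bd
  have R2 : risk DN hhat fstar ≤ risk DN hhat fN + risk DN fstar fN := by
    have := risk_triangle DN chhat cfN cfstar hhat_bd hfN_bd hfstar_bd
    have e : risk DN fN fstar = risk DN fstar fN := by
      unfold risk; simp only [abs_sub_comm]
    linarith
  have nn : ∀ (μ : Measure X) (a b : X → ℝ), 0 ≤ risk μ a b := fun μ a b =>
    integral_nonneg fun x => abs_nonneg _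
  calc ENNReal.ofReal (risk DT hhat fT)
      ≤ ENNReal.ofReal (risk DT hhat fstar + risk DT fstar fT) := ENNReal.ofReal_le_ofReal R1
    _ = ENNReal.ofReal (risk DT hhat fstar) + ENNReal.ofReal (risk DT fstar fT) :=
        ENNReal.ofReal_add (nn _ _ _) (nn _ _ _)
    _ ≤ (ENNReal.ofReal (risk DN hhat fstar) + 2 * (K : ENNReal) * ENNReal.ofReal r) +
        ENNReal.ofReal (risk DT fstar fT) := by gcongr
    _ ≤ (ENNReal.ofReal (risk DN hhat fN + risk DN fstar fN) +
        2 * (K : ENNReal) * ENNReal.ofReal r) + ENNReal.ofReal (risk DT fstar fT) := by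
        exact add_le_add (add_le_add (ENNReal.ofReal_le_ofReal R2) le_rfl) le_rfl
    _ = ENNReal.ofReal (risk DN hhat fN) + 2 * (K : ENNReal) * ENNReal.ofReal r +
        ENNReal.ofReal (risk DN fstar fN + risk DT fstar fT) := by
        rw [ENNReal.ofReal_add (nn _ _ _) (nn _ _ _), ENNReal.ofReal_add (nn _ _ _) (nn _ _ _)]
        ring
end
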